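/- arXiv:2304.09676 — 2 statements merged into one kernel-verified Lean document; each statement's English description precedes it below -/
import Mathlib

section
/- Let n be a natural number and define G_n : ℂ → ℂ by G_n(x) = ∑_{k=0}^{n} ((2n-k)!/((n-k)! · k!)) x^k, and set h_n(x) = e^{-x} G_n(x) - G_n(-x). Then the (2n+1)-st iterated derivative of h_n at x = 0 equals (-1)^{n+1} · n!. (Equivalently, the Padé remainder S_n(x) = e^{-x} - G_n(-x)/G_n(x) satisfies S_n(x) = (-1)^{n+1} (n! n!/((2n)!(2n+1)!)) x^{2n+1} + O(x^{2n+2}).) -/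
/-!
By Leibniz' rule, `h_n^{(2n+1)}(0) = ∑_{k ≤ 2n+1} (-1)^{2n+1-k} C(2n+1,k) G_n^{(k)}(0)`, the term
`G_n(-x)` contributing nothing because `G_n` has degree `n`. For `k ≤ 2n` the Taylor coefficient
`G_n^{(k)}(0) = (2n-k)!/(n-k)!` equals `(2n-k)(2n-k-1)⋯(n-k+1)`, the value at `k` of a polynomial
of degree `n` in `k`, while `G_n^{(2n+1)}(0) = 0`. The alternating sum is thus the
`(2n+1)`-st forward difference of that polynomial at `0`, which vanishes, minus its value at
`k = 2n+1`, namely `(-1)^n n!`.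
-/

open Complex

/-- The (scaled) denominator polynomial of the `[n/n]` diagonal Padé approximant of
`e^{-x}`: `G_n(x) = ∑_{k=0}^{n} ((2n-k)!/((n-k)!·k!)) x^k = ((2n)!/n!)·₁F₁(-n;-2n;x)`. -/
noncomputable def padeG (n : ℕ) (x : ℂ) : ℂ :=
  ∑ k ∈ Finset.range (n + 1),
    ((Nat.factorial (2 * n - k) : ℂ) /
      ((Nat.factorial (n - k) : ℂ) * (Nat.factorial k : ℂ))) * x ^ k

open Finset Polynomial
open scoped Nat

theorem iteratedDeriv_sum_mul_pow_zero {𝕜 : Type*} [NontriviallyNormedField 𝕜]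
    (c : ℕ → 𝕜) (m k : ℕ) :
    iteratedDeriv k (fun x : 𝕜 => ∑ j ∈ range m, c j * x ^ j) 0 =
      if k < m then k ! * c k else 0 := by
  rw [iteratedDeriv_fun_sum fun j _ => by fun_prop]
  simp only [iteratedDeriv_const_mul_field, iteratedDeriv_fun_pow_zero, Nat.cast_ite,
    Nat.cast_zero, mul_ite, mul_zero, sum_ite_eq, mem_range, mul_comm]

theorem iteratedDeriv_mul_cexp_neg {f : ℂ → ℂ} {N : ℕ} {x : ℂ} (hf : ContDiffAt ℂ N f x) :
    iteratedDeriv N (fun y => exp (-y) * f y) x =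
      exp (-x) * ∑ k ∈ range (N + 1), (-1) ^ (N - k) * N.choose k * iteratedDeriv k f x := by
  have hexp (m : ℕ) : iteratedDeriv m (fun y => exp (-y)) = fun y => (-1) ^ m * exp (-y) := by
    simpa using iteratedDeriv_cexp_const_mul m (-1)
  simp_rw [mul_comm (exp _) (f _)]
  rw [iteratedDeriv_fun_mul hf (by fun_prop), mul_sum]
  refine sum_congr rfl fun k _ => ?_
  rw [hexp]
  ring

theorem sum_range_alternating_choose_mul_eval {R : Type*} [CommRing R] {P : R[X]} {N : ℕ}
    (hP : P.natDegree < N) :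
    ∑ k ∈ range N, (-1) ^ (N - k) * N.choose k * P.eval (k : R) = -P.eval (N : R) := by
  have h := congr_fun (fwdDiff_iter_eq_zero_of_degree_lt hP) 0
  rw [fwdDiff_iter_eq_sum_shift, sum_range_succ] at h
  simp only [zsmul_eq_mul, zero_add, nsmul_eq_mul, mul_one, Pi.zero_apply] at h
  push_cast at h
  simpa [eq_neg_iff_add_eq_zero] using h

noncomputable def padeTaylorPoly (n : ℕ) : ℂ[X] := (descPochhammer ℂ n).comp (C (2 * n : ℂ) - X)

theorem natDegree_padeTaylorPoly_le (n : ℕ) : (padeTaylorPoly n).natDegree ≤ n := by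
  unfold padeTaylorPoly
  calc _ ≤ (descPochhammer ℂ n).natDegree * (C (2 * n : ℂ) - X).natDegree := natDegree_comp_le
    _ ≤ n * 1 := by
      rw [descPochhammer_natDegree]
      gcongr
      rw [← neg_sub, natDegree_neg, natDegree_X_sub_C]
    _ = n := mul_one n

theorem padeTaylorPoly_eval_natCast {n k : ℕ} (hk : k ≤ 2 * n) :
    (padeTaylorPoly n).eval (k : ℂ) = (2 * n - k).descFactorial n := by
  rw [padeTaylorPoly, eval_comp, eval_sub, eval_C, eval_X, ← descPochhammer_eval_eq_descFactorial]
  push_cast [hk]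
  rfl

theorem padeTaylorPoly_eval_two_mul_add_one (n : ℕ) :
    (padeTaylorPoly n).eval ((2 * n + 1 : ℕ) : ℂ) = (-1) ^ n * n ! := by
  rw [padeTaylorPoly, eval_comp, eval_sub, eval_C, eval_X, descPochhammer_eval_eq_prod_range,
    ← prod_range_add_one_eq_factorial, Nat.cast_prod,
    show (-1 : ℂ) ^ n = (-1) ^ #(range n) by rw [card_range], pow_card_mul_prod]
  refine prod_congr rfl fun j _ => ?_
  push_cast
  ring

@[fun_prop]
theorem contDiff_padeG (n : ℕ) {k : WithTop ℕ∞} : ContDiff ℂ k (padeG n) := by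
  unfold padeG
  fun_prop

theorem iteratedDeriv_padeG_zero (n k : ℕ) :
    iteratedDeriv k (padeG n) 0 = if k ≤ 2 * n then ((2 * n - k).descFactorial n : ℂ) else 0 := by
  unfold padeG
  rw [iteratedDeriv_sum_mul_pow_zero]
  split_ifs with hkn hk2n hk2n
  · have hfact := Nat.factorial_mul_descFactorial (show n ≤ 2 * n - k by omega)
    rw [show 2 * n - k - n = n - k by omega] at hfact
    have := (n - k).factorial_ne_zero
    have := k.factorial_ne_zero
    rw [← hfact]
    push_cast
    field_simp
  · omega
  · rw [Nat.descFactorial_eq_zero_iff_lt.2 (by omega), Nat.cast_zero]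
  · rfl

/-- The `(2n+1)`-st iterated derivative of `h_n(x) = e^{-x} G_n(x) - G_n(-x)` at `x = 0`
equals `(-1)^{n+1} · n!`.  Equivalently, the Padé remainder
`S_n(x) = e^{-x} - G_n(-x)/G_n(x)` satisfies
`S_n(x) = (-1)^{n+1}(n! n!/((2n)!(2n+1)!)) x^{2n+1} + O(x^{2n+2})`. -/
theorem iteratedDeriv_pade_defect_leading_coeff (n : ℕ) :
    iteratedDeriv (2 * n + 1)
      (fun x : ℂ => Complex.exp (-x) * padeG n x - padeG n (-x)) 0 =
      (-1) ^ (n + 1) * (Nat.factorial n : ℂ) := by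
  have hG_deriv : iteratedDeriv (2 * n + 1) (padeG n) 0 = 0 := by
    rw [iteratedDeriv_padeG_zero, if_neg (by omega)]
  have hreflect : iteratedDeriv (2 * n + 1) (fun x => padeG n (-x)) 0 = 0 := by
    rw [iteratedDeriv_comp_neg, neg_zero, hG_deriv, smul_zero]
  rw [iteratedDeriv_fun_sub (by fun_prop) (by fun_prop), hreflect, sub_zero,
    iteratedDeriv_mul_cexp_neg (by fun_prop), neg_zero, exp_zero, one_mul, sum_range_succ,
    hG_deriv, mul_zero, add_zero]
  calc _ = ∑ k ∈ range (2 * n + 1),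
        (-1) ^ (2 * n + 1 - k) * (2 * n + 1).choose k * (padeTaylorPoly n).eval (k : ℂ) := by
        refine sum_congr rfl fun k hk => ?_
        have hk : k ≤ 2 * n := Nat.lt_succ_iff.1 (mem_range.1 hk)
        rw [iteratedDeriv_padeG_zero, if_pos hk, padeTaylorPoly_eval_natCast hk]
    _ = -(padeTaylorPoly n).eval ((2 * n + 1 : ℕ) : ℂ) :=
        sum_range_alternating_choose_mul_eval ((natDegree_padeTaylorPoly_le n).trans_lt (by omega))
    _ = (-1) ^ (n + 1) * n ! := by
        rw [padeTaylorPoly_eval_two_mul_add_one]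
        ring
end

section
/- For every real number k, the function r ↦ sinc(r)² e^{irk} is Lebesgue integrable on ℝ and ∫_{-∞}^{∞} sinc(r)² e^{irk} dr = (π/4)((k-2)sgn(k-2) - 2k·sgn(k) + (k+2)sgn(k+2)), where sgn denotes the sign function (sgn 0 = 0). -/
/-!
The tent function `(1 - |x|)₊` is even, so its Fourier transform at `w` is
`∫₀¹ 2 cos(2πwt) (1 - t) dt = sinc(πw)²`, an elementary antiderivative computation.
The tent is continuous and both it and `sinc(π·)²` are integrable (`sinc² ≤ 2 / (1 + x²)`),
so Fourier inversion recovers the tent as the inverse Fourier transform of `sinc(π·)²`.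
The substitution `r = πv` then identifies the integral with `π · tent(k/2)`, and
`4 tent(k/2) = |k - 2| - 2|k| + |k + 2|`.
-/

open Complex MeasureTheory

/-- The unnormalized sinc function on the real line. -/
noncomputable def rsinc (x : ℝ) : ℝ := if x = 0 then 1 else Real.sin x / x

open Real Set FourierTransform

theorem rsinc_eq_sinc : rsinc = sinc := rfl

namespace Real

lemma sinc_mul_self (x : ℝ) : sinc x * x = sin x := by
  rcases eq_or_ne x 0 with rfl | hx
  · simp
  · rw [sinc_of_ne_zero hx, div_mul_cancel₀ _ hx]

lemma sinc_sq_le_two_mul_inv_one_add_sq (x : ℝ) : sinc x ^ 2 ≤ 2 * (1 + x ^ 2)⁻¹ := by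
  rw [le_mul_inv_iff₀ (by positivity)]
  have h₁ : sinc x ^ 2 ≤ 1 := (sq_le_one_iff_abs_le_one _).mpr (abs_sinc_le_one x)
  have h₂ : (sinc x * x) ^ 2 ≤ 1 := by rw [sinc_mul_self]; exact sin_sq_le_one x
  nlinarith

lemma integrable_sinc_sq : Integrable fun x => sinc x ^ 2 :=
  (integrable_inv_one_add_sq.const_mul 2).mono' (by fun_prop)
    (ae_of_all _ fun x => by
      rw [norm_of_nonneg (sq_nonneg _)]; exact sinc_sq_le_two_mul_inv_one_add_sq x)

lemma mul_sign_self (x : ℝ) : x * Real.sign x = |x| := by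
  rcases lt_trichotomy x 0 with h | rfl | h
  · rw [sign_of_neg h, abs_of_neg h, mul_neg_one]
  · simp
  · rw [sign_of_pos h, abs_of_pos h, mul_one]

end Real

theorem intervalIntegral.integral_symmetric_eq_integral_add_comp_neg {E : Type*}
    [NormedAddCommGroup E] [NormedSpace ℝ E] {f : ℝ → E} {a : ℝ}
    (hf : IntervalIntegrable f volume (-a) a) :
    ∫ x in -a..a, f x = ∫ x in 0..a, (f x + f (-x)) := by
  have h0 : (0 : ℝ) ∈ uIcc (-a) a := by
    rcases le_total 0 a with h | h <;> simp [h]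
  have hl : IntervalIntegrable f volume (-a) 0 := hf.mono_set (uIcc_subset_uIcc_left h0)
  have hr : IntervalIntegrable f volume 0 a := hf.mono_set (uIcc_subset_uIcc_right h0)
  have hl' : IntervalIntegrable (fun x => f (-x)) volume 0 a := by
    simpa using (hl.comp_sub_left 0).symm
  rw [← integral_add_adjacent_intervals hl hr, integral_add hr hl', add_comm, integral_comp_neg,
    neg_zero]

noncomputable def tent (x : ℝ) : ℝ := max (1 - |x|) 0

@[fun_prop]
lemma continuous_tent : Continuous tent := by unfold tent; fun_prop

lemma tent_neg (x : ℝ) : tent (-x) = tent x := by simp [tent]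

lemma tent_of_mem_Icc {x : ℝ} (hx : x ∈ Icc (0 : ℝ) 1) : tent x = 1 - x := by
  rw [tent, abs_of_nonneg hx.1, max_eq_left (by linarith [hx.2])]

lemma support_tent : Function.support tent = Ioo (-1) 1 := by
  ext x; simp [tent, abs_lt]

lemma hasCompactSupport_tent : HasCompactSupport tent := by
  rw [HasCompactSupport, tsupport, support_tent, closure_Ioo (by norm_num)]
  exact isCompact_Icc

lemma integrable_tent : Integrable fun x => (tent x : ℂ) :=
  (continuous_ofReal.comp continuous_tent).integrable_of_hasCompactSupport
    (hasCompactSupport_tent.comp_left ofReal_zero)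

lemma integral_two_cos_mul_one_sub (w : ℝ) :
    ∫ t in (0 : ℝ)..1, 2 * Real.cos (2 * w * t) * (1 - t) = sinc w ^ 2 := by
  rcases eq_or_ne w 0 with rfl | hw
  · norm_num [intervalIntegral.integral_comp_sub_left fun x : ℝ => x]
  · have hderiv : ∀ t ∈ uIcc (0 : ℝ) 1, HasDerivAt
        (fun t => (1 - t) * Real.sin (2 * w * t) / w - Real.cos (2 * w * t) / (2 * w ^ 2))
        (2 * Real.cos (2 * w * t) * (1 - t)) t := by
      intro t _
      have hlin := (hasDerivAt_id t).const_mul (2 * w)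
      have h := ((((hasDerivAt_id t).const_sub 1).mul hlin.sin).div_const w).sub
        (hlin.cos.div_const (2 * w ^ 2))
      refine h.congr_deriv ?_
      simp only [id]
      field_simp
      ring
    rw [intervalIntegral.integral_eq_sub_of_hasDerivAt hderiv
      (Continuous.intervalIntegrable (by fun_prop) _ _), sinc_of_ne_zero hw]
    simp only [sub_self, mul_one, zero_mul, zero_div, zero_sub, sub_zero, mul_zero, Real.sin_zero,
      Real.cos_zero, one_div, mul_inv_rev, sub_neg_eq_add]
    field_simp
    linear_combination (-1) * Real.cos_two_mul w - 2 * Real.sin_sq_add_cos_sq w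

lemma fourier_tent (w : ℝ) : 𝓕 (fun x => (tent x : ℂ)) w = (sinc (π * w) ^ 2 : ℝ) := by
  set F : ℝ → ℂ := fun v => exp (↑(-2 * π * v * w) * I) • (tent v : ℂ)
  have hF : Continuous F := by unfold F; fun_prop
  have hsupp : Function.support F ⊆ Ioc (-1) 1 := by
    intro v hv
    have hv' : tent v ≠ 0 := fun h => hv (by simp [F, h])
    exact Ioo_subset_Ioc_self (support_tent ▸ hv')
  have heven : ∀ v ∈ uIcc (0 : ℝ) 1,
      F v + F (-v) = ((2 * Real.cos (2 * (π * w) * v) * (1 - v) : ℝ) : ℂ) := by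
    intro v hv
    rw [uIcc_of_le zero_le_one] at hv
    simp only [F, tent_neg, tent_of_mem_Icc hv, smul_eq_mul]
    push_cast
    rw [Complex.two_cos]
    ring_nf
  rw [fourier_real_eq_integral_exp_smul,
    ← intervalIntegral.integral_eq_integral_of_support_subset hsupp,
    intervalIntegral.integral_symmetric_eq_integral_add_comp_neg (hF.intervalIntegrable _ _),
    intervalIntegral.integral_congr heven, intervalIntegral.integral_ofReal,
    integral_two_cos_mul_one_sub]

lemma fourierInv_sinc_pi_mul_sq (x : ℝ) :
    𝓕⁻ (fun w => ((sinc (π * w) ^ 2 : ℝ) : ℂ)) x = tent x := by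
  have hF : 𝓕 (fun x => (tent x : ℂ)) = fun w => ((sinc (π * w) ^ 2 : ℝ) : ℂ) :=
    funext fourier_tent
  have hFint : Integrable (fun w => ((sinc (π * w) ^ 2 : ℝ) : ℂ)) :=
    (integrable_sinc_sq.comp_mul_left' pi_ne_zero).ofReal
  rw [← hF, integrable_tent.fourierInv_fourier_eq (hF ▸ hFint) (by fun_prop)]

lemma four_mul_tent_half (k : ℝ) :
    4 * tent (k / 2) =
      (k - 2) * Real.sign (k - 2) - 2 * k * Real.sign k + (k + 2) * Real.sign (k + 2) := by
  rw [mul_assoc 2 k, mul_sign_self, mul_sign_self, mul_sign_self, tent, abs_div, abs_two]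
  rcases abs_cases k with ⟨hk, _⟩ | ⟨hk, _⟩ <;>
    rcases abs_cases (k - 2) with ⟨h₁, _⟩ | ⟨h₁, _⟩ <;>
    rcases abs_cases (k + 2) with ⟨h₂, _⟩ | ⟨h₂, _⟩ <;>
    rcases max_cases (1 - |k| / 2) 0 with ⟨h, _⟩ | ⟨h, _⟩ <;>
    linarith

/-- For every real `k`, the function `r ↦ sinc(r)² e^{irk}` is Lebesgue integrable on `ℝ`
and `∫ sinc(r)² e^{irk} dr = (π/4)((k-2)sgn(k-2) - 2k·sgn(k) + (k+2)sgn(k+2))`, where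
`sgn` is the sign function with `sgn 0 = 0`.  (Fourier transform of `sinc²`.) -/
theorem fourier_transform_rsinc_sq (k : ℝ) :
    Integrable (fun r : ℝ => ((rsinc r : ℂ)) ^ 2 * Complex.exp (Complex.I * r * k)) ∧
    ∫ r : ℝ, ((rsinc r : ℂ)) ^ 2 * Complex.exp (Complex.I * r * k) =
      ((Real.pi / 4 * ((k - 2) * Real.sign (k - 2) - 2 * k * Real.sign k +
        (k + 2) * Real.sign (k + 2)) : ℝ) : ℂ) := by
  rw [rsinc_eq_sinc]
  set g : ℝ → ℂ := fun r => ((sinc r : ℂ)) ^ 2 * Complex.exp (Complex.I * r * k)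
  have hnorm : ∀ r, ‖g r‖ = sinc r ^ 2 := fun r => by
    rw [norm_mul, mul_assoc, ← ofReal_mul, norm_exp_I_mul_ofReal, mul_one, norm_pow, norm_real,
      Real.norm_eq_abs, sq_abs]
  refine ⟨integrable_sinc_sq.mono' (by unfold g; fun_prop)
    (ae_of_all _ fun r => (hnorm r).le), ?_⟩
  calc ∫ r, g r = π • ∫ v, g (π * v) := by
        rw [Measure.integral_comp_mul_left, abs_inv, abs_of_pos pi_pos, smul_inv_smul₀ pi_ne_zero]
    _ = π • 𝓕⁻ (fun w => ((sinc (π * w) ^ 2 : ℝ) : ℂ)) (k / 2) := by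
        rw [fourierInv_eq']
        congr 2 with v
        simp only [g, Real.inner_apply, smul_eq_mul]
        push_cast
        ring_nf
    _ = _ := by
        rw [fourierInv_sinc_pi_mul_sq, real_smul, ← four_mul_tent_half]
        push_cast
        ring
end
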